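/- arXiv:1801.10539 — 4 statements merged into one kernel-verified Lean document; each statement's English description precedes it below -/
import Mathlib

section
/- Let (M,d,μ) be a metric measure space with 0 < μ(B(x;R)) < ∞ for all x ∈ M, R > 0, and let p : M × M × (0,∞) → [0,∞) be a measurable symmetric kernel satisfying the semigroup property p(x,y;s+t) = ∫_M p(x,z;s) p(z,y;t) dμ(z), stochastic completeness ∫_M p(x,y;t) dμ(y) = 1, and, for some constant C ∈ [2,∞), the two-sided Li–Yau Gaussian bound C^{-1} e^{-C d(x,y)²/t} (μ(B(x;t^{1/2})) μ(B(y;t^{1/2})))^{-1/2} ≤ p(x,y;t) ≤ C e^{-d(x,y)²/(Ct)} (μ(B(x;t^{1/2})) μ(B(y;t^{1/2})))^{-1/2} for all x,y ∈ M, t > 0, together with the volume doubling property μ(B(x;2R)) ≤ C μ(B(x;R)) for all x ∈ M, R > 0. Let Ω ⊆ M be open and define H_Ω(t) = ∫_Ω ∫_Ω p(x,y;t) dμ(y) dμ(x). If H_Ω(T) < ∞ for some T > 0, then H_Ω(t) < ∞ for all t > 0. -/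
open MeasureTheory Metric ENNReal

/-!
Write `H(t + t) = ∫ (∫_Ω p(x,z;t) dx)² dz` using the semigroup identity and symmetry. Since
`p(·,·;s)` is a symmetric Markov kernel, `f ↦ ∫ f(w) p(w,·;s) dw` is an `L²`-contraction
(Cauchy–Schwarz against the probability density `p(·,z;s)`), so `H` is nonincreasing. For
`C² t ≤ T` the Gaussian factor of the upper bound at time `t` is dominated by that of the lower
bound at time `T`, and doubling `n` times from radius `√t` to `√T` compares the volume factors,
so `p(·,·;t) ≤ K p(·,·;T)` and `H(t) ≤ K H(T)`. Larger times follow by monotonicity.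
-/

theorem sigmaFinite_of_measure_ball_lt_top {M : Type*} [PseudoMetricSpace M] [MeasurableSpace M]
    (μ : Measure M) (h : ∀ x : M, ∀ R : ℝ, 0 < R → μ (ball x R) < ⊤) : SigmaFinite μ := by
  rcases isEmpty_or_nonempty M with hM | hM
  · exact ⟨⟨⟨fun _ => Set.univ, fun _ => trivial,
      fun _ => by simp [Set.univ_eq_empty_iff.2 hM], Set.iUnion_const _⟩⟩⟩
  · obtain ⟨x₀⟩ := hM
    exact ⟨⟨⟨fun n => ball x₀ (n + 1), fun _ => trivial, fun n => h x₀ _ n.cast_add_one_pos,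
      iUnion_ball_nat_succ x₀⟩⟩⟩

section Lebesgue

variable {α : Type*} [MeasurableSpace α]

theorem sq_lintegral_mul_le_lintegral_sq_mul {ν : Measure α} {f q : α → ℝ≥0∞}
    (hf : AEMeasurable f ν) (hq : AEMeasurable q ν) (hq_one : ∫⁻ a, q a ∂ν = 1) :
    (∫⁻ a, f a * q a ∂ν) ^ 2 ≤ ∫⁻ a, f a ^ 2 * q a ∂ν := by
  have holder := ENNReal.lintegral_mul_norm_pow_le (f := fun a => f a ^ 2 * q a)
    ((hf.pow_const 2).mul hq) hq (p := 1 / 2) (q := 1 / 2) (by norm_num) (by norm_num) (by norm_num)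
  have split : ∀ a, (f a ^ 2 * q a) ^ (1 / 2 : ℝ) * q a ^ (1 / 2 : ℝ) = f a * q a := by
    intro a
    rw [ENNReal.mul_rpow_of_nonneg _ _ (by norm_num), mul_assoc,
      ← ENNReal.rpow_add_of_nonneg _ _ (by norm_num) (by norm_num), ← ENNReal.rpow_natCast,
      ← ENNReal.rpow_mul]
    norm_num
  rw [lintegral_congr split, hq_one, one_rpow, mul_one] at holder
  calc (∫⁻ a, f a * q a ∂ν) ^ 2 ≤ ((∫⁻ a, f a ^ 2 * q a ∂ν) ^ (1 / 2 : ℝ)) ^ 2 :=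
        pow_le_pow_left' holder 2
    _ = ∫⁻ a, f a ^ 2 * q a ∂ν := by
        rw [← ENNReal.rpow_natCast, ← ENNReal.rpow_mul]
        norm_num

theorem lintegral_sq_lintegral_mul_le {μ : Measure α} [SFinite μ] {q : α → α → ℝ≥0∞}
    (hq : Measurable (Function.uncurry q)) (hq_left : ∀ z, ∫⁻ w, q w z ∂μ = 1)
    (hq_right : ∀ w, ∫⁻ z, q w z ∂μ = 1) {f : α → ℝ≥0∞} (hf : Measurable f) :
    ∫⁻ z, (∫⁻ w, f w * q w z ∂μ) ^ 2 ∂μ ≤ ∫⁻ w, f w ^ 2 ∂μ :=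
  calc ∫⁻ z, (∫⁻ w, f w * q w z ∂μ) ^ 2 ∂μ ≤ ∫⁻ z, ∫⁻ w, f w ^ 2 * q w z ∂μ ∂μ :=
        lintegral_mono fun z => sq_lintegral_mul_le_lintegral_sq_mul hf.aemeasurable
          (hq.of_uncurry_right).aemeasurable (hq_left z)
    _ = ∫⁻ w, ∫⁻ z, f w ^ 2 * q w z ∂μ ∂μ :=
        lintegral_lintegral_swap (((hf.pow_const 2).comp measurable_snd).mul
          (hq.comp measurable_swap)).aemeasurable
    _ = ∫⁻ w, f w ^ 2 ∂μ := lintegral_congr fun w => by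
        rw [lintegral_const_mul _ hq.of_uncurry_left, hq_right, mul_one]

end Lebesgue

section HeatKernel

variable {M : Type*} [MeasurableSpace M] {μ : Measure M} {p : M → M → ℝ → ℝ≥0∞}

structure IsSymmetricMarkovKernel (μ : Measure M) (p : M → M → ℝ → ℝ≥0∞) : Prop where
  measurable : ∀ t, Measurable fun q : M × M => p q.1 q.2 t
  symm : ∀ x y t, 0 < t → p x y t = p y x t
  semigroup : ∀ x y s t, 0 < s → 0 < t → p x y (s + t) = ∫⁻ z, p x z s * p z y t ∂μ
  lintegral_eq_one : ∀ x t, 0 < t → ∫⁻ y, p x y t ∂μ = 1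

noncomputable def heatContent (μ : Measure M) (p : M → M → ℝ → ℝ≥0∞) (Ω : Set M) (t : ℝ) : ℝ≥0∞ :=
  ∫⁻ x in Ω, ∫⁻ y in Ω, p x y t ∂μ ∂μ

theorem heatContent_le_mul (Ω : Set M) {t T : ℝ} {K : ℝ≥0∞} (hK : K ≠ ⊤)
    (h : ∀ x y : M, p x y t ≤ K * p x y T) : heatContent μ p Ω t ≤ K * heatContent μ p Ω T :=
  calc heatContent μ p Ω t ≤ ∫⁻ x in Ω, ∫⁻ y in Ω, K * p x y T ∂μ ∂μ :=
        lintegral_mono fun x => lintegral_mono fun y => h x y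
    _ = K * heatContent μ p Ω T := by simp_rw [lintegral_const_mul' _ _ hK, heatContent]

namespace IsSymmetricMarkovKernel

theorem measurable_left (hp : IsSymmetricMarkovKernel μ p) (y : M) (t : ℝ) :
    Measurable fun x => p x y t :=
  (hp.measurable t).comp (measurable_id.prodMk measurable_const)

theorem measurable_right (hp : IsSymmetricMarkovKernel μ p) (x : M) (t : ℝ) :
    Measurable fun y => p x y t :=
  (hp.measurable t).comp (measurable_const.prodMk measurable_id)

theorem lintegral_left_eq_one (hp : IsSymmetricMarkovKernel μ p) (y : M) {t : ℝ} (ht : 0 < t) :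
    ∫⁻ x, p x y t ∂μ = 1 := by
  simp_rw [hp.symm _ y t ht]
  exact hp.lintegral_eq_one y t ht

variable [SFinite μ]

theorem measurable_setLIntegral_left (hp : IsSymmetricMarkovKernel μ p) (Ω : Set M) (t : ℝ) :
    Measurable fun z => ∫⁻ x in Ω, p x z t ∂μ :=
  (hp.measurable t).lintegral_prod_left'

theorem setLIntegral_add (hp : IsSymmetricMarkovKernel μ p) (Ω : Set M) {s t : ℝ} (hs : 0 < s)
    (ht : 0 < t) (z : M) :
    ∫⁻ x in Ω, p x z (s + t) ∂μ = ∫⁻ w, (∫⁻ x in Ω, p x w s ∂μ) * p w z t ∂μ :=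
  calc ∫⁻ x in Ω, p x z (s + t) ∂μ = ∫⁻ x in Ω, ∫⁻ w, p x w s * p w z t ∂μ ∂μ :=
        lintegral_congr fun x => hp.semigroup x z s t hs ht
    _ = ∫⁻ w, ∫⁻ x in Ω, p x w s * p w z t ∂μ ∂μ :=
        lintegral_lintegral_swap ((hp.measurable s).mul
          ((hp.measurable_left z t).comp measurable_snd)).aemeasurable
    _ = ∫⁻ w, (∫⁻ x in Ω, p x w s ∂μ) * p w z t ∂μ :=
        lintegral_congr fun w => lintegral_mul_const _ (hp.measurable_left w s)

theorem heatContent_add_self (hp : IsSymmetricMarkovKernel μ p) (Ω : Set M) {t : ℝ}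
    (ht : 0 < t) : heatContent μ p Ω (t + t) = ∫⁻ z, (∫⁻ x in Ω, p x z t ∂μ) ^ 2 ∂μ :=
  calc heatContent μ p Ω (t + t)
      = ∫⁻ y in Ω, ∫⁻ w, (∫⁻ x in Ω, p x w t ∂μ) * p w y t ∂μ ∂μ := by
        refine lintegral_congr fun y => ?_
        rw [← hp.setLIntegral_add Ω ht ht y]
        exact lintegral_congr fun x => hp.symm y x _ (add_pos ht ht)
    _ = ∫⁻ w, (∫⁻ x in Ω, p x w t ∂μ) * ∫⁻ y in Ω, p w y t ∂μ ∂μ := by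
        rw [lintegral_lintegral_swap (((hp.measurable_setLIntegral_left Ω t).comp
          measurable_snd).mul ((hp.measurable t).comp measurable_swap)).aemeasurable]
        exact lintegral_congr fun w => lintegral_const_mul _ (hp.measurable_right w t)
    _ = ∫⁻ z, (∫⁻ x in Ω, p x z t ∂μ) ^ 2 ∂μ := by
        refine lintegral_congr fun w => ?_
        simp_rw [hp.symm w _ t ht, sq]

theorem heatContent_antitoneOn (hp : IsSymmetricMarkovKernel μ p) (Ω : Set M) :
    AntitoneOn (heatContent μ p Ω) (Set.Ioi 0) := by
  intro s hs t ht hst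
  obtain rfl | hst := hst.eq_or_lt
  · exact le_rfl
  have ha : 0 < s / 2 := half_pos hs
  have hb : 0 < (t - s) / 2 := half_pos (sub_pos.2 hst)
  calc heatContent μ p Ω t
      = heatContent μ p Ω ((s / 2 + (t - s) / 2) + (s / 2 + (t - s) / 2)) := by ring_nf
    _ = ∫⁻ z, (∫⁻ w, (∫⁻ x in Ω, p x w (s / 2) ∂μ) * p w z ((t - s) / 2) ∂μ) ^ 2 ∂μ := by
        simp_rw [hp.heatContent_add_self Ω (add_pos ha hb), hp.setLIntegral_add Ω ha hb]
    _ ≤ ∫⁻ w, (∫⁻ x in Ω, p x w (s / 2) ∂μ) ^ 2 ∂μ :=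
        lintegral_sq_lintegral_mul_le (hp.measurable _) (fun z => hp.lintegral_left_eq_one z hb)
          (fun w => hp.lintegral_eq_one w _ hb) (hp.measurable_setLIntegral_left Ω _)
    _ = heatContent μ p Ω s := by rw [← hp.heatContent_add_self Ω ha, add_halves]

end IsSymmetricMarkovKernel

end HeatKernel

section Doubling

variable {M : Type*} [PseudoMetricSpace M] [MeasurableSpace M] {μ : Measure M} {D : ℝ≥0∞}

theorem measure_ball_two_pow_mul_le
    (hdbl : ∀ x : M, ∀ R : ℝ, 0 < R → μ (ball x (2 * R)) ≤ D * μ (ball x R))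
    (x : M) {R : ℝ} (hR : 0 < R) (n : ℕ) : μ (ball x (2 ^ n * R)) ≤ D ^ n * μ (ball x R) := by
  induction n with
  | zero => simp
  | succ n ih =>
    calc μ (ball x (2 ^ (n + 1) * R)) = μ (ball x (2 * (2 ^ n * R))) := by ring_nf
      _ ≤ D * μ (ball x (2 ^ n * R)) := hdbl x _ (by positivity)
      _ ≤ D * (D ^ n * μ (ball x R)) := mul_le_mul_right ih _
      _ = D ^ (n + 1) * μ (ball x R) := by ring

theorem exists_measure_ball_le_pow_mul
    (hdbl : ∀ x : M, ∀ R : ℝ, 0 < R → μ (ball x (2 * R)) ≤ D * μ (ball x R))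
    {r : ℝ} (hr : 0 < r) (R : ℝ) : ∃ n : ℕ, ∀ x : M, μ (ball x R) ≤ D ^ n * μ (ball x r) := by
  obtain ⟨n, hn⟩ := pow_unbounded_of_one_lt (R / r) one_lt_two
  refine ⟨n, fun x => (measure_mono (ball_subset_ball ?_)).trans
    (measure_ball_two_pow_mul_le hdbl x hr n)⟩
  exact ((div_lt_iff₀ hr).1 hn).le

end Doubling

theorem ENNReal.rpow_neg_half_le_mul_rpow_neg_half {a b c : ℝ≥0∞} (hc₀ : c ≠ 0) (hc : c ≠ ⊤)
    (h : b ≤ c ^ 2 * a) : a ^ (-(1 : ℝ) / 2) ≤ c * b ^ (-(1 : ℝ) / 2) := by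
  have hb : b ^ (1 / 2 : ℝ) ≤ c * a ^ (1 / 2 : ℝ) :=
    calc b ^ (1 / 2 : ℝ) ≤ (c ^ 2 * a) ^ (1 / 2 : ℝ) := ENNReal.rpow_le_rpow h (by norm_num)
      _ = c * a ^ (1 / 2 : ℝ) := by
        rw [ENNReal.mul_rpow_of_nonneg _ _ (by norm_num), ← ENNReal.rpow_natCast,
          ← ENNReal.rpow_mul]
        norm_num
  rw [neg_div, ENNReal.rpow_neg, ENNReal.rpow_neg, ← inv_inv c,
    ← ENNReal.mul_inv (.inl (by simpa using hc)) (.inl (by simpa using hc₀)),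
    ← ENNReal.div_eq_inv_mul]
  exact ENNReal.inv_le_inv.2 (ENNReal.div_le_of_le_mul' hb)

theorem Real.exp_neg_sq_div_le {C t T : ℝ} (hC : 0 < C) (ht : 0 < t) (hT : 0 < T)
    (htT : C ^ 2 * t ≤ T) (d : ℝ) : Real.exp (-d ^ 2 / (C * t)) ≤ Real.exp (-(C * d ^ 2) / T) := by
  rw [Real.exp_le_exp, div_le_div_iff₀ (mul_pos hC ht) hT]
  nlinarith [mul_le_mul_of_nonneg_right htT (sq_nonneg d)]

theorem exists_le_mul_of_gaussian_bounds {M : Type*} [PseudoMetricSpace M] [MeasurableSpace M]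
    {μ : Measure M} {p : M → M → ℝ → ℝ≥0∞} {C t T : ℝ} (hC : 0 < C) (ht : 0 < t) (hT : 0 < T)
    (htT : C ^ 2 * t ≤ T)
    (hdbl : ∀ x : M, ∀ R : ℝ, 0 < R → μ (ball x (2 * R)) ≤ ENNReal.ofReal C * μ (ball x R))
    (hupper : ∀ x y : M, p x y t ≤ ENNReal.ofReal (C * Real.exp (-(dist x y ^ 2) / (C * t))) *
      (μ (ball x (Real.sqrt t)) * μ (ball y (Real.sqrt t))) ^ (-(1 : ℝ) / 2))
    (hlower : ∀ x y : M, ENNReal.ofReal (C⁻¹ * Real.exp (-(C * dist x y ^ 2) / T)) *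
      (μ (ball x (Real.sqrt T)) * μ (ball y (Real.sqrt T))) ^ (-(1 : ℝ) / 2) ≤ p x y T) :
    ∃ K : ℝ≥0∞, K ≠ ⊤ ∧ ∀ x y : M, p x y t ≤ K * p x y T := by
  obtain ⟨n, hn⟩ := exists_measure_ball_le_pow_mul hdbl (Real.sqrt_pos.2 ht) (Real.sqrt T)
  set c := ENNReal.ofReal C ^ n
  have hc₀ : c ≠ 0 := pow_ne_zero _ (ENNReal.ofReal_pos.2 hC).ne'
  have hc : c ≠ ⊤ := ENNReal.pow_ne_top ENNReal.ofReal_ne_top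
  refine ⟨ENNReal.ofReal C ^ 2 * c,
    ENNReal.mul_ne_top (ENNReal.pow_ne_top ENNReal.ofReal_ne_top) hc, fun x y => ?_⟩
  have hvol : (μ (ball x (Real.sqrt t)) * μ (ball y (Real.sqrt t))) ^ (-(1 : ℝ) / 2) ≤
      c * (μ (ball x (Real.sqrt T)) * μ (ball y (Real.sqrt T))) ^ (-(1 : ℝ) / 2) := by
    refine ENNReal.rpow_neg_half_le_mul_rpow_neg_half hc₀ hc ?_
    calc μ (ball x (Real.sqrt T)) * μ (ball y (Real.sqrt T))
        ≤ (c * μ (ball x (Real.sqrt t))) * (c * μ (ball y (Real.sqrt t))) :=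
          mul_le_mul' (hn x) (hn y)
      _ = c ^ 2 * (μ (ball x (Real.sqrt t)) * μ (ball y (Real.sqrt t))) := by ring
  have hgauss : ENNReal.ofReal (C * Real.exp (-(dist x y ^ 2) / (C * t))) ≤
      ENNReal.ofReal C ^ 2 * ENNReal.ofReal (C⁻¹ * Real.exp (-(C * dist x y ^ 2) / T)) := by
    rw [← ENNReal.ofReal_pow hC.le, ← ENNReal.ofReal_mul (by positivity)]
    refine ENNReal.ofReal_le_ofReal ?_
    calc C * Real.exp (-(dist x y ^ 2) / (C * t)) ≤ C * Real.exp (-(C * dist x y ^ 2) / T) :=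
          mul_le_mul_of_nonneg_left (Real.exp_neg_sq_div_le hC ht hT htT _) hC.le
      _ = C ^ 2 * (C⁻¹ * Real.exp (-(C * dist x y ^ 2) / T)) := by field_simp
  calc p x y t ≤ ENNReal.ofReal (C * Real.exp (-(dist x y ^ 2) / (C * t))) *
        (μ (ball x (Real.sqrt t)) * μ (ball y (Real.sqrt t))) ^ (-(1 : ℝ) / 2) := hupper x y
    _ ≤ ENNReal.ofReal C ^ 2 * ENNReal.ofReal (C⁻¹ * Real.exp (-(C * dist x y ^ 2) / T)) *
        (c * (μ (ball x (Real.sqrt T)) * μ (ball y (Real.sqrt T))) ^ (-(1 : ℝ) / 2)) :=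
        mul_le_mul' hgauss hvol
    _ = ENNReal.ofReal C ^ 2 * c * (ENNReal.ofReal (C⁻¹ * Real.exp (-(C * dist x y ^ 2) / T)) *
        (μ (ball x (Real.sqrt T)) * μ (ball y (Real.sqrt T))) ^ (-(1 : ℝ) / 2)) := by ring
    _ ≤ ENNReal.ofReal C ^ 2 * c * p x y T := mul_le_mul_right (hlower x y) _

theorem heat_content_finite_of_finite_general
    {M : Type*} [MetricSpace M] [MeasurableSpace M]
    (μ : Measure M)
    (hball : ∀ x : M, ∀ R : ℝ, 0 < R → 0 < μ (ball x R) ∧ μ (ball x R) < ⊤)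
    (p : M → M → ℝ → ℝ≥0∞)
    (hp_meas : Measurable fun q : M × M × ℝ => p q.1 q.2.1 q.2.2)
    (hp_symm : ∀ x y : M, ∀ t : ℝ, 0 < t → p x y t = p y x t)
    (hp_semi : ∀ x y : M, ∀ s t : ℝ, 0 < s → 0 < t →
      p x y (s + t) = ∫⁻ z, p x z s * p z y t ∂μ)
    (hp_sc : ∀ x : M, ∀ t : ℝ, 0 < t → ∫⁻ y, p x y t ∂μ = 1)
    (C : ℝ) (hC : 2 ≤ C)
    (hLY_lower : ∀ x y : M, ∀ t : ℝ, 0 < t →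
      ENNReal.ofReal (C⁻¹ * Real.exp (-(C * dist x y ^ 2) / t)) *
        (μ (ball x (Real.sqrt t)) * μ (ball y (Real.sqrt t))) ^ (-(1 : ℝ) / 2)
        ≤ p x y t)
    (hLY_upper : ∀ x y : M, ∀ t : ℝ, 0 < t →
      p x y t ≤ ENNReal.ofReal (C * Real.exp (-(dist x y ^ 2) / (C * t))) *
        (μ (ball x (Real.sqrt t)) * μ (ball y (Real.sqrt t))) ^ (-(1 : ℝ) / 2))
    (hdbl : ∀ x : M, ∀ R : ℝ, 0 < R →
      μ (ball x (2 * R)) ≤ ENNReal.ofReal C * μ (ball x R))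
    (Ω : Set M)
    (H : ℝ → ℝ≥0∞)
    (hH : ∀ t : ℝ, H t = ∫⁻ x in Ω, ∫⁻ y in Ω, p x y t ∂μ ∂μ)
    (T : ℝ) (hT : 0 < T) (hHT : H T < ⊤) :
    ∀ t : ℝ, 0 < t → H t < ⊤ := by
  intro t ht
  obtain rfl : H = heatContent μ p Ω := funext hH
  have hp : IsSymmetricMarkovKernel μ p :=
    ⟨fun t => hp_meas.comp (measurable_fst.prodMk (measurable_snd.prodMk measurable_const)),
      hp_symm, hp_semi, hp_sc⟩
  have := sigmaFinite_of_measure_ball_lt_top μ fun x R hR => (hball x R hR).2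
  have hC₀ : 0 < C := by linarith
  set s := min t (T / C ^ 2)
  have hs : 0 < s := lt_min ht (by positivity)
  have hsT : C ^ 2 * s ≤ T := by
    calc C ^ 2 * s ≤ C ^ 2 * (T / C ^ 2) := by gcongr; exact min_le_right _ _
      _ = T := by field_simp
  obtain ⟨K, hK, hpK⟩ := exists_le_mul_of_gaussian_bounds hC₀ hs hT hsT hdbl
    (fun x y => hLY_upper x y s hs) (fun x y => hLY_lower x y T hT)
  calc heatContent μ p Ω t ≤ heatContent μ p Ω s :=
        hp.heatContent_antitoneOn Ω hs ht (min_le_left _ _)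
    _ ≤ K * heatContent μ p Ω T := heatContent_le_mul Ω hK hpK
    _ < ⊤ := ENNReal.mul_lt_top hK.lt_top hHT

/-- If a metric measure space carries a symmetric measurable kernel satisfying the
semigroup identity, stochastic completeness, the two-sided Li–Yau gaussian bound with
constant `C ∈ [2,∞)`, and volume doubling, and if the heat content
`H_Ω(t) = ∫_Ω ∫_Ω p(x,y;t) dμ(y) dμ(x)` of an open set `Ω` is finite for some `T > 0`,
then it is finite for all `t > 0`. -/
theorem heat_content_finite_of_finite
    {M : Type*} [MetricSpace M] [MeasurableSpace M] [BorelSpace M]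
    (μ : Measure M)
    (hball : ∀ x : M, ∀ R : ℝ, 0 < R → 0 < μ (ball x R) ∧ μ (ball x R) < ⊤)
    (p : M → M → ℝ → ℝ≥0∞)
    (hp_meas : Measurable fun q : M × M × ℝ => p q.1 q.2.1 q.2.2)
    (hp_symm : ∀ x y : M, ∀ t : ℝ, 0 < t → p x y t = p y x t)
    (hp_semi : ∀ x y : M, ∀ s t : ℝ, 0 < s → 0 < t →
      p x y (s + t) = ∫⁻ z, p x z s * p z y t ∂μ)
    (hp_sc : ∀ x : M, ∀ t : ℝ, 0 < t → ∫⁻ y, p x y t ∂μ = 1)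
    (C : ℝ) (hC : 2 ≤ C)
    (hLY_lower : ∀ x y : M, ∀ t : ℝ, 0 < t →
      ENNReal.ofReal (C⁻¹ * Real.exp (-(C * dist x y ^ 2) / t)) *
        (μ (ball x (Real.sqrt t)) * μ (ball y (Real.sqrt t))) ^ (-(1 : ℝ) / 2)
        ≤ p x y t)
    (hLY_upper : ∀ x y : M, ∀ t : ℝ, 0 < t →
      p x y t ≤ ENNReal.ofReal (C * Real.exp (-(dist x y ^ 2) / (C * t))) *
        (μ (ball x (Real.sqrt t)) * μ (ball y (Real.sqrt t))) ^ (-(1 : ℝ) / 2))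
    (hdbl : ∀ x : M, ∀ R : ℝ, 0 < R →
      μ (ball x (2 * R)) ≤ ENNReal.ofReal C * μ (ball x R))
    (Ω : Set M) (hΩ : IsOpen Ω)
    (H : ℝ → ℝ≥0∞)
    (hH : ∀ t : ℝ, H t = ∫⁻ x in Ω, ∫⁻ y in Ω, p x y t ∂μ ∂μ)
    (T : ℝ) (hT : 0 < T) (hHT : H T < ⊤) :
    ∀ t : ℝ, 0 < t → H t < ⊤ :=
  heat_content_finite_of_finite_general μ hball p hp_meas hp_symm hp_semi hp_sc C hC hLY_lower
    hLY_upper hdbl Ω H hH T hT hHT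
end

section
/- Let (M,d,μ) be a metric measure space with 0 < μ(B(x;R)) < ∞ for all x ∈ M, R > 0, and let p : M × M × (0,∞) → [0,∞) be a measurable symmetric kernel satisfying the semigroup property, stochastic completeness ∫_M p(x,y;t) dμ(y) = 1, and, for some constant C ∈ [2,∞), the two-sided Li–Yau Gaussian bound C^{-1} e^{-C d(x,y)²/t} (μ(B(x;t^{1/2})) μ(B(y;t^{1/2})))^{-1/2} ≤ p(x,y;t) ≤ C e^{-d(x,y)²/(Ct)} (μ(B(x;t^{1/2})) μ(B(y;t^{1/2})))^{-1/2}, together with volume doubling μ(B(x;2R)) ≤ C μ(B(x;R)). Let Ω ⊆ M be open, define H_Ω(t) = ∫_Ω ∫_Ω p(x,y;t) dμ(y) dμ(x) and μ_Ω(x;R) = μ(B(x;R) ∩ Ω). If H_Ω(T) < ∞ for some T > 0, then for all t > 0, ∫_Ω μ_Ω(x;t^{1/2}) / μ(B(x;t^{1/2})) dμ(x) < ∞. -/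
open MeasureTheory Metric ENNReal

/-!
For `y ∈ B(x;√t)`, volume doubling bounds both `μ(B(x;√T))` and `μ(B(y;√T))` by a fixed
multiple of `μ(B(x;√t))`, so the Li–Yau lower bound gives `p(x,y;T) ≥ c / μ(B(x;√t))` with
`c > 0` independent of `x` and `y`. Integrating over `y ∈ B(x;√t) ∩ Ω` and then over `x ∈ Ω`
yields `c · ∫_Ω μ_Ω(x;√t) / μ(B(x;√t)) dμ(x) ≤ H_Ω(T) < ∞`.
-/

theorem ENNReal.inv_mul_inv_le (a b : ℝ≥0∞) : a⁻¹ * b⁻¹ ≤ (a * b)⁻¹ := by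
  rcases eq_or_ne a 0 with rfl | ha
  · simp
  rcases eq_or_ne b 0 with rfl | hb
  · simp
  exact (ENNReal.mul_inv (Or.inl ha) (Or.inr hb)).ge

theorem ENNReal.inv_le_mul_rpow_neg_half {a b w : ℝ≥0∞} (ha : a ≤ w) (hb : b ≤ w) :
    w⁻¹ ≤ (a * b) ^ (-(1 : ℝ) / 2) := by
  have hw : w = (w * w) ^ (1 / 2 : ℝ) := by
    rw [← sq, ← ENNReal.rpow_natCast, ← ENNReal.rpow_mul]; norm_num
  rw [neg_div, ENNReal.rpow_neg, hw]
  exact ENNReal.inv_le_inv.2 (ENNReal.rpow_le_rpow (mul_le_mul' ha hb) (by norm_num))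

section Doubling

variable {M : Type*} [PseudoMetricSpace M] [MeasurableSpace M] {μ : Measure M} {D : ℝ≥0∞}

theorem measure_ball_le_pow_mul_of_mem_ball
    (hdbl : ∀ x : M, ∀ R : ℝ, 0 < R → μ (ball x (2 * R)) ≤ D * μ (ball x R))
    {x y : M} {s ρ : ℝ} (hs : 0 < s) {n : ℕ} (hρ : ρ ≤ 2 ^ n * s) (hy : y ∈ ball x s) :
    μ (ball y ρ) ≤ D ^ (n + 1) * μ (ball x s) := by
  have hsub : ball y ρ ⊆ ball x (2 ^ (n + 1) * s) := by
    apply ball_subset_ball'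
    have : s ≤ 2 ^ n * s := le_mul_of_one_le_left hs.le (one_le_pow₀ one_le_two)
    rw [mem_ball] at hy
    rw [pow_succ]
    linarith
  exact (measure_mono hsub).trans (measure_ball_two_pow_mul_le hdbl x hs _)

theorem le_of_liYau_lower_of_mem_ball
    (hdbl : ∀ x : M, ∀ R : ℝ, 0 < R → μ (ball x (2 * R)) ≤ D * μ (ball x R))
    {C T : ℝ} (hC : 0 ≤ C) (hT : 0 ≤ T) {k : M → M → ℝ≥0∞}
    (hLY : ∀ x y : M, ENNReal.ofReal (C⁻¹ * Real.exp (-(C * dist x y ^ 2) / T)) *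
      (μ (ball x (√T)) * μ (ball y (√T))) ^ (-(1 : ℝ) / 2) ≤ k x y)
    {s : ℝ} (hs : 0 < s) {n : ℕ} (hn : √T ≤ 2 ^ n * s) {x y : M} (hy : y ∈ ball x s) :
    ENNReal.ofReal (C⁻¹ * Real.exp (-(C * s ^ 2) / T)) / D ^ (n + 1) * (μ (ball x s))⁻¹
      ≤ k x y := by
  have hdist : dist x y ^ 2 ≤ s ^ 2 := by
    rw [mem_ball, dist_comm] at hy
    exact pow_le_pow_left₀ dist_nonneg hy.le 2
  have hexp : ENNReal.ofReal (C⁻¹ * Real.exp (-(C * s ^ 2) / T))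
      ≤ ENNReal.ofReal (C⁻¹ * Real.exp (-(C * dist x y ^ 2) / T)) := by
    gcongr
  have hvol : (D ^ (n + 1) * μ (ball x s))⁻¹
      ≤ (μ (ball x (√T)) * μ (ball y (√T))) ^ (-(1 : ℝ) / 2) :=
    ENNReal.inv_le_mul_rpow_neg_half
      (measure_ball_le_pow_mul_of_mem_ball hdbl hs hn (mem_ball_self hs))
      (measure_ball_le_pow_mul_of_mem_ball hdbl hs hn hy)
  calc ENNReal.ofReal (C⁻¹ * Real.exp (-(C * s ^ 2) / T)) / D ^ (n + 1) * (μ (ball x s))⁻¹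
      = ENNReal.ofReal (C⁻¹ * Real.exp (-(C * s ^ 2) / T)) *
          ((D ^ (n + 1))⁻¹ * (μ (ball x s))⁻¹) := by
        rw [div_eq_mul_inv, mul_assoc]
    _ ≤ ENNReal.ofReal (C⁻¹ * Real.exp (-(C * dist x y ^ 2) / T)) *
          (μ (ball x (√T)) * μ (ball y (√T))) ^ (-(1 : ℝ) / 2) :=
        mul_le_mul' hexp ((ENNReal.inv_mul_inv_le _ _).trans hvol)
    _ ≤ k x y := hLY x y

end Doubling

theorem mul_setLIntegral_measure_ball_inter_div_le {M : Type*} [PseudoMetricSpace M]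
    [MeasurableSpace M] [OpensMeasurableSpace M] {μ : Measure M} {Ω : Set M}
    (hΩ : MeasurableSet Ω) {k : M → M → ℝ≥0∞} {c : ℝ≥0∞} {s : ℝ}
    (hk : ∀ x, ∀ y ∈ ball x s, c * (μ (ball x s))⁻¹ ≤ k x y) :
    c * ∫⁻ x in Ω, μ (ball x s ∩ Ω) / μ (ball x s) ∂μ ≤ ∫⁻ x in Ω, ∫⁻ y in Ω, k x y ∂μ ∂μ := by
  refine (lintegral_const_mul_le _ _).trans (lintegral_mono fun x => ?_)
  calc c * (μ (ball x s ∩ Ω) / μ (ball x s))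
      = ∫⁻ _ in ball x s ∩ Ω, c * (μ (ball x s))⁻¹ ∂μ := by
        rw [setLIntegral_const, div_eq_mul_inv, mul_comm (μ _), mul_assoc]
    _ ≤ ∫⁻ y in ball x s ∩ Ω, k x y ∂μ :=
        setLIntegral_mono' (measurableSet_ball.inter hΩ) fun y hy => hk x y hy.1
    _ ≤ ∫⁻ y in Ω, k x y ∂μ := lintegral_mono_set Set.inter_subset_right

theorem heat_content_integral_finite_general
    {M : Type*} [MetricSpace M] [MeasurableSpace M] [BorelSpace M]
    (μ : Measure M)
    (p : M → M → ℝ → ℝ≥0∞)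
    (C : ℝ) (hC : 2 ≤ C)
    (hLY_lower : ∀ x y : M, ∀ t : ℝ, 0 < t →
      ENNReal.ofReal (C⁻¹ * Real.exp (-(C * dist x y ^ 2) / t)) *
        (μ (ball x (Real.sqrt t)) * μ (ball y (Real.sqrt t))) ^ (-(1 : ℝ) / 2)
        ≤ p x y t)
    (hdbl : ∀ x : M, ∀ R : ℝ, 0 < R →
      μ (ball x (2 * R)) ≤ ENNReal.ofReal C * μ (ball x R))
    (Ω : Set M) (hΩ : IsOpen Ω)
    (H : ℝ → ℝ≥0∞)
    (hH : ∀ t : ℝ, H t = ∫⁻ x in Ω, ∫⁻ y in Ω, p x y t ∂μ ∂μ)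
    (T : ℝ) (hT : 0 < T) (hHT : H T < ⊤) :
    ∀ t : ℝ, 0 < t →
      (∫⁻ x in Ω, μ (ball x (Real.sqrt t) ∩ Ω) / μ (ball x (Real.sqrt t)) ∂μ) < ⊤ := by
  intro t ht
  have hst : 0 < √t := Real.sqrt_pos.2 ht
  obtain ⟨n, hn⟩ := pow_unbounded_of_one_lt (√T / √t) one_lt_two
  have hnT : √T ≤ 2 ^ n * √t := ((div_lt_iff₀ hst).1 hn).le
  have hC0 : 0 < C := by linarith
  have hc : ENNReal.ofReal (C⁻¹ * Real.exp (-(C * √t ^ 2) / T)) / ENNReal.ofReal C ^ (n + 1)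
      ≠ 0 :=
    ENNReal.div_ne_zero.2 ⟨(ENNReal.ofReal_pos.2 (by positivity)).ne', pow_ne_top ofReal_ne_top⟩
  have hbound := mul_setLIntegral_measure_ball_inter_div_le hΩ.measurableSet fun x y hy =>
    le_of_liYau_lower_of_mem_ball hdbl hC0.le hT.le (hLY_lower · · T hT) hst hnT hy
  rw [← hH] at hbound
  exact lt_top_of_mul_ne_top_right (ne_top_of_le_ne_top hHT.ne hbound) hc

/-- Theorem 1(i): under the Li–Yau bound and volume doubling, if the heat content
`H_Ω(T)` is finite for some `T > 0`, then `∫_Ω μ(B(x;√t) ∩ Ω)/μ(B(x;√t)) dμ(x) < ∞`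
for all `t > 0`. -/
theorem heat_content_integral_finite
    {M : Type*} [MetricSpace M] [MeasurableSpace M] [BorelSpace M]
    (μ : Measure M)
    (hball : ∀ x : M, ∀ R : ℝ, 0 < R → 0 < μ (ball x R) ∧ μ (ball x R) < ⊤)
    (p : M → M → ℝ → ℝ≥0∞)
    (hp_meas : Measurable fun q : M × M × ℝ => p q.1 q.2.1 q.2.2)
    (hp_symm : ∀ x y : M, ∀ t : ℝ, 0 < t → p x y t = p y x t)
    (hp_semi : ∀ x y : M, ∀ s t : ℝ, 0 < s → 0 < t →
      p x y (s + t) = ∫⁻ z, p x z s * p z y t ∂μ)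
    (hp_sc : ∀ x : M, ∀ t : ℝ, 0 < t → ∫⁻ y, p x y t ∂μ = 1)
    (C : ℝ) (hC : 2 ≤ C)
    (hLY_lower : ∀ x y : M, ∀ t : ℝ, 0 < t →
      ENNReal.ofReal (C⁻¹ * Real.exp (-(C * dist x y ^ 2) / t)) *
        (μ (ball x (Real.sqrt t)) * μ (ball y (Real.sqrt t))) ^ (-(1 : ℝ) / 2)
        ≤ p x y t)
    (hLY_upper : ∀ x y : M, ∀ t : ℝ, 0 < t →
      p x y t ≤ ENNReal.ofReal (C * Real.exp (-(dist x y ^ 2) / (C * t))) *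
        (μ (ball x (Real.sqrt t)) * μ (ball y (Real.sqrt t))) ^ (-(1 : ℝ) / 2))
    (hdbl : ∀ x : M, ∀ R : ℝ, 0 < R →
      μ (ball x (2 * R)) ≤ ENNReal.ofReal C * μ (ball x R))
    (Ω : Set M) (hΩ : IsOpen Ω)
    (H : ℝ → ℝ≥0∞)
    (hH : ∀ t : ℝ, H t = ∫⁻ x in Ω, ∫⁻ y in Ω, p x y t ∂μ ∂μ)
    (T : ℝ) (hT : 0 < T) (hHT : H T < ⊤) :
    ∀ t : ℝ, 0 < t →
      (∫⁻ x in Ω, μ (ball x (Real.sqrt t) ∩ Ω) / μ (ball x (Real.sqrt t)) ∂μ) < ⊤ :=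
  heat_content_integral_finite_general μ p C hC hLY_lower hdbl Ω hΩ H hH T hT hHT
end

section
/- Let m ≥ 1, let (z_i)_{i∈ℕ} be an enumeration of ℤ^m in ℝ^m, let r₁ ≥ r₂ ≥ … > 0 with δ = 1 − 2r₁ > 0 and ∑_{i=1}^∞ r_i^{2m} < ∞, and let Ω = ⋃_{i∈ℕ} B(z_i; r_i). Define μ_Ω(x;R) = |B(x;R) ∩ Ω| (Lebesgue measure). Then ∫_Ω μ_Ω(x; δ/2) / |B(x; δ/2)| dx ≤ ω_m (4/δ)^m ∑_{i=1}^∞ r_i^{2m}, where ω_m is the volume of the unit ball in ℝ^m. -/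
/-!
Distinct balls `B(z_i; r_i)` are at distance at least `1 - 2 r₁ = δ` from each other, so for `x` in
`B(z_i; r_i)` the ball `B(x; δ/2)` meets `Ω` only inside `B(z_i; r_i)`. The integrand is therefore
at most `(2 r_i / δ)^m` on that ball, its integral over it at most `ω_m (2/δ)^m r_i^{2m}`, and
summing over `i` gives the bound, even with `2/δ` in place of `4/δ`.
-/

open MeasureTheory Metric ENNReal

/-- `z : ℕ → ℝᵐ` is an enumeration of the integer lattice `ℤᵐ ⊆ ℝᵐ`. -/
def IsLatticeEnum (m : ℕ) (z : ℕ → EuclideanSpace ℝ (Fin m)) : Prop :=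
  Function.Injective z ∧
    Set.range z = {x : EuclideanSpace ℝ (Fin m) | ∀ j : Fin m, ∃ k : ℤ, x j = (k : ℝ)}

open Module Measure

theorem PiLp.one_le_dist_of_forall_exists_intCast {ι : Type*} [Fintype ι] {p : ℝ≥0∞}
    [Fact (1 ≤ p)] {x y : PiLp p fun _ : ι => ℝ} (hx : ∀ j, ∃ k : ℤ, x j = k)
    (hy : ∀ j, ∃ k : ℤ, y j = k) (hxy : x ≠ y) : 1 ≤ dist x y := by
  obtain ⟨j, hj⟩ : ∃ j, x j ≠ y j := by
    by_contra! h
    exact hxy (PiLp.ext h)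
  obtain ⟨k, hk⟩ := hx j
  obtain ⟨l, hl⟩ := hy j
  rw [hk, hl] at hj
  calc (1 : ℝ) ≤ dist k l := Int.pairwise_one_le_dist fun h => hj (congrArg _ h)
    _ = dist (x j) (y j) := by rw [hk, hl, Int.dist_cast_real]
    _ ≤ dist x y := PiLp.dist_apply_le x y j

theorem IsLatticeEnum.one_le_dist {m : ℕ} {z : ℕ → EuclideanSpace ℝ (Fin m)}
    (hz : IsLatticeEnum m z) {i j : ℕ} (hij : i ≠ j) : 1 ≤ dist (z i) (z j) := by
  have hcoord : ∀ k, ∀ l : Fin m, ∃ n : ℤ, z k l = n := fun k =>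
    (hz.2.subset (Set.mem_range_self k) :)
  exact PiLp.one_le_dist_of_forall_exists_intCast (hcoord i) (hcoord j) (hz.1.ne hij)

section SeparatedBalls

variable {X ι : Type*} [PseudoMetricSpace X] {c : ι → X} {r : ι → ℝ}

theorem ball_inter_iUnion_ball_subset_ball {ε : ℝ} {i : ι}
    (hsep : ∀ j, j ≠ i → ε + r i + r j ≤ dist (c i) (c j)) {x : X} (hx : x ∈ ball (c i) (r i)) :
    ball x ε ∩ ⋃ j, ball (c j) (r j) ⊆ ball (c i) (r i) := by
  rintro y ⟨hyx, hy⟩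
  obtain ⟨j, hyj⟩ := Set.mem_iUnion.mp hy
  by_cases hji : j = i
  · exact hji ▸ hyj
  · have := hsep j hji
    have := dist_triangle4 (c i) x y (c j)
    rw [mem_ball] at hx hyx hyj
    rw [dist_comm] at hx hyx
    linarith

end SeparatedBalls

section AddHaar

variable {E : Type*} [NormedAddCommGroup E] [MeasurableSpace E] [BorelSpace E]
  (μ : Measure E) [μ.IsAddHaarMeasure]

theorem setLIntegral_measure_ball_inter_div_le {s U : Set E} {ε : ℝ}
    (h : ∀ x ∈ s, ball x ε ∩ U ⊆ s) :
    ∫⁻ x in s, μ (ball x ε ∩ U) / μ (ball x ε) ∂μ ≤ μ s / μ (ball 0 ε) * μ s :=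
  calc ∫⁻ x in s, μ (ball x ε ∩ U) / μ (ball x ε) ∂μ
      ≤ ∫⁻ _ in s, μ s / μ (ball 0 ε) ∂μ := setLIntegral_mono measurable_const fun x hx => by
        rw [addHaar_ball_center μ x]
        exact ENNReal.div_le_div_right (measure_mono (h x hx)) _
    _ = μ s / μ (ball 0 ε) * μ s := setLIntegral_const _ _

variable [NormedSpace ℝ E] [FiniteDimensional ℝ E]

theorem addHaar_ball_div_addHaar_ball_mul_addHaar_ball {x : E} {R ε : ℝ} (hR : 0 < R)
    (hε : 0 < ε) :
    μ (ball x R) / μ (ball 0 ε) * μ (ball x R)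
      = ENNReal.ofReal (R ^ (2 * finrank ℝ E) / ε ^ finrank ℝ E) * μ (ball 0 1) := by
  have hV₀ : μ (ball (0 : E) 1) ≠ 0 := (measure_ball_pos μ 0 one_pos).ne'
  have hV : μ (ball (0 : E) 1) ≠ ⊤ := measure_ball_lt_top.ne
  rw [addHaar_ball_of_pos μ x hR, addHaar_ball_of_pos μ 0 hε, ENNReal.mul_div_mul_right _ _ hV₀ hV,
    ← ENNReal.ofReal_div_of_pos (by positivity), ← mul_assoc,
    ← ENNReal.ofReal_mul (by positivity)]
  congr 2
  ring

end AddHaar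

theorem lattice_balls_mu_integral_bound_general
    (m : ℕ)
    (z : ℕ → EuclideanSpace ℝ (Fin m)) (hz : IsLatticeEnum m z)
    (r : ℕ → ℝ) (hrpos : ∀ i, 0 < r i) (hrdec : Antitone r)
    (δ : ℝ) (hδdef : δ = 1 - 2 * r 0) (hδ : 0 < δ)
    (hsum : Summable (fun i : ℕ => r i ^ (2 * m)))
    (Ω : Set (EuclideanSpace ℝ (Fin m))) (hΩ : Ω = ⋃ i : ℕ, ball (z i) (r i))
    (ω : ℝ) (hω : ω = (volume (ball (0 : EuclideanSpace ℝ (Fin m)) 1)).toReal) :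
    (∫⁻ x in Ω, volume (ball x (δ / 2) ∩ Ω) / volume (ball x (δ / 2)))
      ≤ ENNReal.ofReal (ω * (4 / δ) ^ m * ∑' i : ℕ, r i ^ (2 * m)) := by
  have hsep : ∀ i j, i ≠ j → δ / 2 + r i + r j ≤ dist (z i) (z j) := fun i j hij => by
    linarith [hz.one_le_dist hij, hrdec (Nat.zero_le i), hrdec (Nat.zero_le j)]
  have hV : volume (ball (0 : EuclideanSpace ℝ (Fin m)) 1) = ENNReal.ofReal ω := by
    rw [hω, ENNReal.ofReal_toReal measure_ball_lt_top.ne]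
  have hball (i : ℕ) := (setLIntegral_measure_ball_inter_div_le volume
    fun x => ball_inter_iUnion_ball_subset_ball (hsep i · ·.symm) (ε := δ / 2)).trans_eq
    (addHaar_ball_div_addHaar_ball_mul_addHaar_ball volume (hrpos i) (half_pos hδ))
  simp only [finrank_euclideanSpace_fin] at hball
  subst hΩ
  rw [lintegral_iUnion (fun _ => measurableSet_ball) fun i j hij =>
    ball_disjoint_ball (by linarith [hsep i j hij])]
  refine (ENNReal.tsum_le_tsum hball).trans ?_
  have hr2m (i : ℕ) : 0 ≤ r i ^ (2 * m) := pow_nonneg (hrpos i).le _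
  rw [ENNReal.tsum_mul_right, ← ENNReal.ofReal_tsum_of_nonneg
    (fun i => div_nonneg (hr2m i) (by positivity)) (hsum.div_const _), tsum_div_const, hV,
    ← ENNReal.ofReal_mul (div_nonneg (tsum_nonneg hr2m) (by positivity))]
  refine ENNReal.ofReal_le_ofReal ?_
  have hω₀ : 0 ≤ ω := hω ▸ ENNReal.toReal_nonneg
  have hS₀ : 0 ≤ ∑' i, r i ^ (2 * m) := tsum_nonneg hr2m
  calc (∑' i, r i ^ (2 * m)) / (δ / 2) ^ m * ω = ω * (2 / δ) ^ m * ∑' i, r i ^ (2 * m) := by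
        rw [div_pow, div_pow]
        field_simp
    _ ≤ ω * (4 / δ) ^ m * ∑' i, r i ^ (2 * m) := by gcongr; norm_num

/-- For `Ω` a union of disjoint balls `B(z_i;r_i)` centred at the points of `ℤᵐ` with
decreasing radii, `δ = 1 - 2 r₁ > 0` and `∑ r_i^{2m} < ∞`, one has
`∫_Ω |B(x;δ/2) ∩ Ω| / |B(x;δ/2)| dx ≤ ω_m (4/δ)^m ∑ r_i^{2m}`. -/
theorem lattice_balls_mu_integral_bound
    (m : ℕ) (hm : 1 ≤ m)
    (z : ℕ → EuclideanSpace ℝ (Fin m)) (hz : IsLatticeEnum m z)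
    (r : ℕ → ℝ) (hrpos : ∀ i, 0 < r i) (hrdec : Antitone r)
    (δ : ℝ) (hδdef : δ = 1 - 2 * r 0) (hδ : 0 < δ)
    (hsum : Summable (fun i : ℕ => r i ^ (2 * m)))
    (Ω : Set (EuclideanSpace ℝ (Fin m))) (hΩ : Ω = ⋃ i : ℕ, ball (z i) (r i))
    (ω : ℝ) (hω : ω = (volume (ball (0 : EuclideanSpace ℝ (Fin m)) 1)).toReal) :
    (∫⁻ x in Ω, volume (ball x (δ / 2) ∩ Ω) / volume (ball x (δ / 2)))
      ≤ ENNReal.ofReal (ω * (4 / δ) ^ m * ∑' i : ℕ, r i ^ (2 * m)) :=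
  lattice_balls_mu_integral_bound_general m z hz r hrpos hrdec δ hδdef hδ hsum Ω hΩ ω hω
end

section
/- Let f : (0,∞) → [0,∞) be increasing and g : (0,∞) → [0,∞) be decreasing, with f·g summable in the sense that ∑_{i=1}^∞ f(i) g(i) < ∞ and x ↦ f(x)g(x) is integrable on [1,∞). Then | ∑_{i=1}^∞ f(i) g(i) − ∫_1^∞ f(x) g(x) dx | ≤ ∑_{i=1}^∞ f(i+1) ( g(i) − g(i+1) ). -/
/-!
On `[i + 1, i + 2]` the integrand `f x * g x` lies between `f (i + 1) * g (i + 2)` and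
`f (i + 2) * g (i + 1)`, by monotonicity. The first bound differs from the `i`-th term
`f (i + 1) * g (i + 1)` of the series by `f (i + 1) * (g (i + 1) - g (i + 2))`, the second from the
`(i + 1)`-st term by `f (i + 2) * (g (i + 1) - g (i + 2))`; both are at most the `i`-th term of the
error series. Summing over `i` (the dropped first term of the series being nonnegative) gives the
two-sided bound.
-/

open MeasureTheory Set

theorem ENNReal.ofReal_le_tsum_ofReal {ι : Type*} {b : ι → ℝ} {x : ℝ} (hb : ∀ i, 0 ≤ b i)
    (h : Summable b → x ≤ ∑' i, b i) : ENNReal.ofReal x ≤ ∑' i, ENNReal.ofReal (b i) := by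
  by_cases htop : ∑' i, ENNReal.ofReal (b i) = ⊤
  · exact htop ▸ le_top
  have hs : Summable b :=
    (ENNReal.summable_toReal htop).congr fun i => ENNReal.toReal_ofReal (hb i)
  rw [← ENNReal.ofReal_tsum_of_nonneg hb hs]
  exact ENNReal.ofReal_le_ofReal (h hs)

theorem abs_tsum_sub_tsum_le_tsum_of_sandwich {a b c : ℕ → ℝ} (hc : Summable c) (ha : Summable a)
    (hb : Summable b) (hc0 : 0 ≤ c 0) (hlower : ∀ i, c i - b i ≤ a i)
    (hupper : ∀ i, a i ≤ c (i + 1) + b i) :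
    |∑' i, c i - ∑' i, a i| ≤ ∑' i, b i := by
  have hcshift : Summable fun i => c (i + 1) := (summable_nat_add_iff 1).2 hc
  have hle : ∑' i, a i ≤ ∑' i, c i + ∑' i, b i :=
    calc ∑' i, a i ≤ ∑' i, (c (i + 1) + b i) := (ha.tsum_le_tsum hupper (hcshift.add hb))
      _ = ∑' i, c (i + 1) + ∑' i, b i := hcshift.tsum_add hb
      _ ≤ ∑' i, c i + ∑' i, b i := by rw [hc.tsum_eq_zero_add]; linarith
  have hge : ∑' i, c i - ∑' i, b i ≤ ∑' i, a i :=
    calc ∑' i, c i - ∑' i, b i = ∑' i, (c i - b i) := (hc.tsum_sub hb).symm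
      _ ≤ ∑' i, a i := (hc.sub hb).tsum_le_tsum hlower ha
  rw [abs_sub_le_iff]
  constructor <;> linarith

theorem Ioi_eq_iUnion_Ioc_add_natCast {α : Type*} [Ring α] [LinearOrder α] [IsStrictOrderedRing α]
    [Archimedean α] (a : α) : Ioi a = ⋃ n : ℕ, Ioc (a + n) (a + n + 1) := by
  ext x
  simp only [mem_Ioi, mem_iUnion, mem_Ioc]
  constructor
  · intro hx
    obtain ⟨n, hn⟩ := mem_iUnion.1 ((iUnion_Ioc_add_intCast a).symm ▸ mem_univ x)
    lift n to ℕ using by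
      have : (-1 : α) < n := by
        have := hx.trans_le hn.2
        rw [add_assoc, lt_add_iff_pos_right] at this
        exact neg_lt_iff_pos_add.2 this
      have : (-1 : ℤ) < n := by exact_mod_cast this
      omega
    exact ⟨n, by exact_mod_cast hn⟩
  · rintro ⟨n, hn, -⟩
    exact (le_add_of_nonneg_right n.cast_nonneg).trans_lt hn

theorem hasSum_intervalIntegral_Ioi {E : Type*} [NormedAddCommGroup E] [NormedSpace ℝ E]
    {μ : Measure ℝ} {φ : ℝ → E} {a : ℝ} (hφ : IntegrableOn φ (Ioi a) μ) :
    HasSum (fun n : ℕ => ∫ x in (a + n)..(a + n + 1), φ x ∂μ) (∫ x in Ioi a, φ x ∂μ) := by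
  have hdisj : Pairwise (Function.onFun Disjoint fun n : ℕ => Ioc (a + n) (a + n + 1)) := by
    intro i j hij
    simpa using pairwise_disjoint_Ioc_add_intCast a (Nat.cast_injective.ne hij : (i : ℤ) ≠ j)
  rw [Ioi_eq_iUnion_Ioc_add_natCast] at hφ ⊢
  simpa only [intervalIntegral.integral_of_le (le_add_of_nonneg_right zero_le_one)] using
    hasSum_integral_iUnion (fun _ => measurableSet_Ioc) hdisj hφ

section MonotoneAntitone

variable {S : Set ℝ} {f g : ℝ → ℝ} (hf0 : ∀ x ∈ S, 0 ≤ f x) (hg0 : ∀ x ∈ S, 0 ≤ g x)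
  (hf : MonotoneOn f S) (hg : AntitoneOn g S)
include hf0 hg0 hf hg

theorem mul_le_mul_self_le_of_monotoneOn_antitoneOn {x y z : ℝ} (hx : x ∈ S) (hy : y ∈ S)
    (hz : z ∈ S) (hxy : x ≤ y) (hyz : y ≤ z) :
    f x * g z ≤ f y * g y ∧ f y * g y ≤ f z * g x :=
  ⟨mul_le_mul (hf hx hy hxy) (hg hy hz hyz) (hg0 z hz) (hf0 y hy),
    mul_le_mul (hf hy hz hyz) (hg hx hy hxy) (hg0 y hy) (hf0 z hz)⟩

theorem le_intervalIntegral_mul_le_of_monotoneOn_antitoneOn {s t : ℝ} (hst : s ≤ t)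
    (hS : Icc s t ⊆ S) (hint : IntervalIntegrable (fun x => f x * g x) volume s t) :
    (t - s) * (f s * g t) ≤ ∫ x in s..t, f x * g x ∧
      ∫ x in s..t, f x * g x ≤ (t - s) * (f t * g s) := by
  have hbounds (x) (hx : x ∈ Icc s t) := mul_le_mul_self_le_of_monotoneOn_antitoneOn hf0 hg0 hf hg
    (hS (left_mem_Icc.2 hst)) (hS hx) (hS (right_mem_Icc.2 hst)) hx.1 hx.2
  constructor
  · simpa only [intervalIntegral.integral_const, smul_eq_mul] using
      intervalIntegral.integral_mono_on hst intervalIntegrable_const hint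
      fun x hx => (hbounds x hx).1
  · simpa only [intervalIntegral.integral_const, smul_eq_mul] using
      intervalIntegral.integral_mono_on hst hint intervalIntegrable_const
      fun x hx => (hbounds x hx).2

end MonotoneAntitone

/-- Lemma 2: if `f : (0,∞) → [0,∞)` is increasing and `g : (0,∞) → [0,∞)` is decreasing,
and `f·g` is summable (the series `∑ f(i)g(i)` converges and `x ↦ f(x)g(x)` is integrable
on `[1,∞)`), then `|∑_{i≥1} f(i)g(i) - ∫_1^∞ f g| ≤ ∑_{i≥1} f(i+1)(g(i) - g(i+1))`
(the right-hand side being interpreted in `[0,∞]`). -/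
theorem sum_integral_comparison
    (f g : ℝ → ℝ)
    (hf0 : ∀ x : ℝ, 0 < x → 0 ≤ f x)
    (hg0 : ∀ x : ℝ, 0 < x → 0 ≤ g x)
    (hfmono : MonotoneOn f (Set.Ioi (0 : ℝ)))
    (hganti : AntitoneOn g (Set.Ioi (0 : ℝ)))
    (hsum : Summable (fun i : ℕ => f ((i : ℝ) + 1) * g ((i : ℝ) + 1)))
    (hint : IntegrableOn (fun x : ℝ => f x * g x) (Set.Ici (1 : ℝ))) :
    ENNReal.ofReal
        |(∑' i : ℕ, f ((i : ℝ) + 1) * g ((i : ℝ) + 1)) -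
          ∫ x in Set.Ici (1 : ℝ), f x * g x|
      ≤ ∑' i : ℕ, ENNReal.ofReal (f ((i : ℝ) + 2) * (g ((i : ℝ) + 1) - g ((i : ℝ) + 2))) := by
  have hpos (i : ℕ) {k : ℝ} (hk : 0 < k) : (i : ℝ) + k ∈ Ioi (0 : ℝ) :=
    add_pos_of_nonneg_of_pos i.cast_nonneg hk
  have hstep (i : ℕ) : (i : ℝ) + 1 ≤ i + 2 := by linarith
  have hgdiff (i : ℕ) : 0 ≤ g (i + 1) - g (i + 2) :=
    sub_nonneg.2 (hganti (hpos i one_pos) (hpos i two_pos) (hstep i))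
  have hunit (i : ℕ) : f (i + 1) * g (i + 2) ≤ ∫ x in (1 + i : ℝ)..(1 + i + 1), f x * g x ∧
      ∫ x in (1 + i : ℝ)..(1 + i + 1), f x * g x ≤ f (i + 2) * g (i + 1) := by
    have h := le_intervalIntegral_mul_le_of_monotoneOn_antitoneOn hf0 hg0 hfmono hganti
      (hstep i) (fun x hx => (hpos i one_pos).trans_le hx.1)
      ((intervalIntegrable_iff_integrableOn_Icc_of_le (hstep i)).2 (hint.mono_set fun x hx => by
        simp only [mem_Ici]; linarith [hx.1, i.cast_nonneg (α := ℝ)]))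
    rw [add_comm (1 : ℝ), add_assoc, one_add_one_eq_two]
    norm_num at h
    exact h
  have hI := hasSum_intervalIntegral_Ioi (hint.mono_set Ioi_subset_Ici_self)
  refine ENNReal.ofReal_le_tsum_ofReal (fun i => mul_nonneg (hf0 _ (hpos i two_pos)) (hgdiff i))
    fun hb => ?_
  rw [integral_Ici_eq_integral_Ioi, ← hI.tsum_eq]
  refine abs_tsum_sub_tsum_le_tsum_of_sandwich hsum hI.summable hb
    (mul_nonneg (hf0 _ (hpos 0 one_pos)) (hg0 _ (hpos 0 one_pos))) (fun i => ?_) (fun i => ?_)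
  · have hf12 := mul_le_mul_of_nonneg_right (hfmono (hpos i one_pos) (hpos i two_pos) (hstep i))
      (hgdiff i)
    linarith [(hunit i).1]
  · have hcast : ((i + 1 : ℕ) : ℝ) + 1 = i + 2 := by push_cast; ring
    show _ ≤ f (((i + 1 : ℕ) : ℝ) + 1) * g (((i + 1 : ℕ) : ℝ) + 1) + _
    rw [hcast]
    linarith [(hunit i).2]
end
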